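/- Let A be a finite alphabet. If Z and Z' are strong alt-induced codes over A that are both infix codes, then the product ZZ' is a strong alt-induced code that is an infix code. -/
import Mathlib


/-- `X` is a code: every word has at most one factorization into words of `X`. -/
def IsCode {A : Type} (X : Language A) : Prop :=
  ∀ l m : List (List A), (∀ u ∈ l, u ∈ X) → (∀ u ∈ m, u ∈ X) →
    l.flatten = m.flatten → l = m

/-- `l` is an alternative factorization of `w` on `(X, Y)`. -/
def IsAltFact {A : Type} (X Y : Language A) (l : List (List A)) (w : List A) : Prop :=
  2 ≤ l.length ∧ l.flatten = w ∧ (∀ u ∈ l, u ∈ X ∨ u ∈ Y) ∧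
    l.Chain' (fun u v => (u ∈ X → v ∈ Y) ∧ (u ∈ Y → v ∈ X))

/-- Two alternative factorizations are similar: they both begin with words in the same
set (`X` or `Y`), and likewise both end with words in the same set. -/
def SimilarFacts {A : Type} (X Y : Language A) (l l' : List (List A)) : Prop :=
  ((l.headI ∈ X ∧ l'.headI ∈ X) ∨ (l.headI ∈ Y ∧ l'.headI ∈ Y)) ∧
  ((l.getLastI ∈ X ∧ l'.getLastI ∈ X) ∨ (l.getLastI ∈ Y ∧ l'.getLastI ∈ Y))

/-- `(X, Y)` is an alternative code: `X`, `Y` are nonempty subsets of `A⁺` and no word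
of `A⁺` admits two different similar alternative factorizations on `(X, Y)`. -/
def IsAltCode {A : Type} (X Y : Language A) : Prop :=
  X.Nonempty ∧ Y.Nonempty ∧ [] ∉ X ∧ [] ∉ Y ∧
  ∀ w : List A, w ≠ [] → ∀ l l' : List (List A),
    IsAltFact X Y l w → IsAltFact X Y l' w → SimilarFacts X Y l l' → l = l'

/-- `(X, Y)` is a strong alternative code: an alternative code with
`X⁻¹(XY) ⊆ Y` and `(XY)Y⁻¹ ⊆ X`. -/
def IsStrongAltCode {A : Type} (X Y : Language A) : Prop :=
  IsAltCode X Y ∧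
  {u : List A | ∃ x ∈ X, x ++ u ∈ X * Y} ⊆ Y ∧
  {u : List A | ∃ y ∈ Y, u ++ y ∈ X * Y} ⊆ X

/-- `Z` is a strong alt-induced code: `Z = XY` for some strong alternative code `(X, Y)`. -/
def IsStrongAltInduced {A : Type} (Z : Language A) : Prop :=
  ∃ X Y : Language A, IsStrongAltCode X Y ∧ Z = X * Y

/-- Prefix code: no word is a proper prefix of another word of `X`. -/
def IsPrefixCode {A : Type} (X : Language A) : Prop :=
  ∀ u ∈ X, ∀ v ∈ X, u <+: v → u = v

/-- Suffix code: no word is a proper suffix of another word of `X`. -/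
def IsSuffixCode {A : Type} (X : Language A) : Prop :=
  ∀ u ∈ X, ∀ v ∈ X, u <:+ v → u = v

/-- Bifix code: both a prefix code and a suffix code. -/
def IsBifixCode {A : Type} (X : Language A) : Prop :=
  IsPrefixCode X ∧ IsSuffixCode X

/-- p-infix code: no word in `X` is an infix of a proper prefix of another word in `X`. -/
def IsPInfixCode {A : Type} (X : Language A) : Prop :=
  ∀ u ∈ X, ∀ v ∈ X, u ≠ v → ∀ p : List A, p <+: v → p ≠ v → ¬ u <:+: p

/-- s-infix code: no word in `X` is an infix of a proper suffix of another word in `X`. -/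
def IsSInfixCode {A : Type} (X : Language A) : Prop :=
  ∀ u ∈ X, ∀ v ∈ X, u ≠ v → ∀ p : List A, p <:+ v → p ≠ v → ¬ u <:+: p

/-- Infix code: no word in `X` is an infix of a proper infix of another word in `X`. -/
def IsInfixCode {A : Type} (X : Language A) : Prop :=
  ∀ u ∈ X, ∀ v ∈ X, u ≠ v → ∀ p : List A, p <:+: v → p ≠ v → ¬ u <:+: p

/-- p-subinfix code: no word in `X` is a subword of a proper prefix of another word in `X`. -/
def IsPSubinfixCode {A : Type} (X : Language A) : Prop :=
  ∀ u ∈ X, ∀ v ∈ X, u ≠ v → ∀ p : List A, p <+: v → p ≠ v → ¬ List.Sublist u p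

/-- s-subinfix code: no word in `X` is a subword of a proper suffix of another word in `X`. -/
def IsSSubinfixCode {A : Type} (X : Language A) : Prop :=
  ∀ u ∈ X, ∀ v ∈ X, u ≠ v → ∀ p : List A, p <:+ v → p ≠ v → ¬ List.Sublist u p

/-- Subinfix code: no word in `X` is a subword of a proper infix of another word in `X`. -/
def IsSubinfixCode {A : Type} (X : Language A) : Prop :=
  ∀ u ∈ X, ∀ v ∈ X, u ≠ v → ∀ p : List A, p <:+: v → p ≠ v → ¬ List.Sublist u p

/-- Hypercode: no word in `X` is a proper subword of another word in `X`. -/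
def IsHypercode {A : Type} (X : Language A) : Prop :=
  ∀ u ∈ X, ∀ v ∈ X, List.Sublist u v → u = v

/-- Maximal prefix code: a prefix code not properly contained in any prefix code over `A`
(i.e. any nonempty subset of `A⁺` that is a prefix code). -/
def IsMaxPrefixCode {A : Type} (X : Language A) : Prop :=
  IsPrefixCode X ∧ ∀ X' : Language A, [] ∉ X' → IsPrefixCode X' → X ≤ X' → X' ≤ X

/-- Maximal suffix code. -/
def IsMaxSuffixCode {A : Type} (X : Language A) : Prop :=
  IsSuffixCode X ∧ ∀ X' : Language A, [] ∉ X' → IsSuffixCode X' → X ≤ X' → X' ≤ X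

/-- Maximal bifix code. -/
def IsMaxBifixCode {A : Type} (X : Language A) : Prop :=
  IsBifixCode X ∧ ∀ X' : Language A, [] ∉ X' → IsBifixCode X' → X ≤ X' → X' ≤ X

/-- `X` is thin: some word is not an infix of any word of `X`. -/
def IsThin {A : Type} (X : Language A) : Prop :=
  ∃ w : List A, ∀ x ∈ X, ¬ w <:+: x


private lemma infixCode_isPrefixCode' {A : Type} {Z : Language A} (h : IsInfixCode Z) :
    IsPrefixCode Z := by
  intro u hu v hv huv
  by_contra hne
  exact h u hu v hv hne u huv.isInfix hne List.infix_rfl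

private lemma infixCode_isSuffixCode' {A : Type} {Z : Language A} (h : IsInfixCode Z) :
    IsSuffixCode Z := by
  intro u hu v hv huv
  by_contra hne
  exact h u hu v hv hne u huv.isInfix hne List.infix_rfl

private lemma infix_mul' {A : Type} {Z Z' : Language A}
    (h1 : IsInfixCode Z) (h2 : IsInfixCode Z') : IsInfixCode (Z * Z') := by
  intro u hu v hv huv p hpv hpne hup
  obtain ⟨u₁, hu₁, u₂, hu₂, rfl⟩ := Language.mem_mul.mp hu
  obtain ⟨v₁, hv₁, v₂, hv₂, rfl⟩ := Language.mem_mul.mp hv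
  have hplen : p.length < (v₁ ++ v₂).length := by
    rcases Nat.lt_or_ge p.length (v₁ ++ v₂).length with h | h
    · exact h
    · exact absurd (hpv.sublist.eq_of_length (Nat.le_antisymm hpv.length_le h)) hpne
  have hulen : (u₁ ++ u₂).length < (v₁ ++ v₂).length :=
    lt_of_le_of_lt hup.length_le hplen
  obtain ⟨a, b, hab⟩ := hup.trans hpv
  have hab' : (a ++ u₁) ++ (u₂ ++ b) = v₁ ++ v₂ := by
    simpa [List.append_assoc] using hab
  have hlen := congrArg List.length hab'
  simp only [List.length_append] at hlen hulen
  rcases lt_trichotomy (a.length + u₁.length) v₁.length with hcase | hcase | hcase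
  · have hp2 : a ++ u₁ <+: v₁ := by
      rcases List.prefix_or_prefix_of_prefix (⟨u₂ ++ b, hab'⟩ : a ++ u₁ <+: v₁ ++ v₂)
        (v₁.prefix_append v₂) with h | h
      · exact h
      · exfalso; have := h.length_le; simp [List.length_append] at this; omega
    refine h1 u₁ hu₁ v₁ hv₁ ?_ (a ++ u₁) hp2.isInfix ?_ (List.suffix_append a u₁).isInfix
    · intro heq; have := congrArg List.length heq; omega
    · intro heq; have := congrArg List.length heq
      simp only [List.length_append] at this; omega
  · obtain ⟨h₁eq, h₂eq⟩ := List.append_inj hab' (by simp [List.length_append]; omega)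
    by_cases ha : a = []
    · subst ha
      simp only [List.length_nil, Nat.zero_add] at hlen hcase
      refine h2 u₂ hu₂ v₂ hv₂ ?_ u₂ (List.IsPrefix.isInfix ⟨b, h₂eq⟩) ?_ List.infix_rfl
      all_goals intro heq; have := congrArg List.length heq; omega
    · have ha' : 0 < a.length := List.length_pos_iff.mpr ha
      refine h1 u₁ hu₁ v₁ hv₁ ?_ u₁ (List.IsSuffix.isInfix ⟨a, h₁eq⟩) ?_ List.infix_rfl
      all_goals intro heq; have := congrArg List.length heq; omega
  · have hs2 : u₂ ++ b <:+ v₂ := by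
      rcases List.suffix_or_suffix_of_suffix (⟨a ++ u₁, hab'⟩ : u₂ ++ b <:+ v₁ ++ v₂)
        (List.suffix_append v₁ v₂) with h | h
      · exact h
      · exfalso; have := h.length_le; simp [List.length_append] at this; omega
    refine h2 u₂ hu₂ v₂ hv₂ ?_ (u₂ ++ b) hs2.isInfix ?_ (List.prefix_append u₂ b).isInfix
    · intro heq; have := congrArg List.length heq; omega
    · intro heq; have := congrArg List.length heq
      simp only [List.length_append] at this; omega

private lemma uniq_fact' {A : Type} {Z Z' : Language A}
    (hZp : IsPrefixCode Z) (hZ'p : IsPrefixCode Z')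
    (hZe : ([] : List A) ∉ Z) (hZ'e : ([] : List A) ∉ Z') :
    ∀ l l' : List (List A),
      (∀ u ∈ l, u ∈ Z ∨ u ∈ Z') → (∀ u ∈ l', u ∈ Z ∨ u ∈ Z') →
      l.Chain' (fun u v => (u ∈ Z → v ∈ Z') ∧ (u ∈ Z' → v ∈ Z)) →
      l'.Chain' (fun u v => (u ∈ Z → v ∈ Z') ∧ (u ∈ Z' → v ∈ Z)) →
      (l ≠ [] → l' ≠ [] →
        ((l.headI ∈ Z ∧ l'.headI ∈ Z) ∨ (l.headI ∈ Z' ∧ l'.headI ∈ Z'))) →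
      l.flatten = l'.flatten → l = l' := by
  intro l
  induction l with
  | nil =>
    intro l' _ hm' _ _ _ hf
    cases l' with
    | nil => rfl
    | cons u' t' =>
      exfalso
      simp only [List.flatten_nil, List.flatten_cons] at hf
      have hu' : u' = [] := (List.append_eq_nil_iff.mp hf.symm).1
      rcases hm' u' (by simp) with h | h
      · exact hZe (hu' ▸ h)
      · exact hZ'e (hu' ▸ h)
  | cons u t ih =>
    intro l' hm hm' hc hc' hh hf
    cases l' with
    | nil =>
      exfalso
      simp only [List.flatten_nil, List.flatten_cons] at hf
      have hu : u = [] := (List.append_eq_nil_iff.mp hf).1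
      rcases hm u (by simp) with h | h
      · exact hZe (hu ▸ h)
      · exact hZ'e (hu ▸ h)
    | cons u' t' =>
      simp only [List.flatten_cons] at hf
      have hpu : u <+: u' ++ t'.flatten := ⟨t.flatten, hf⟩
      have hpu' : u' <+: u' ++ t'.flatten := ⟨t'.flatten, rfl⟩
      have hcomp := List.prefix_or_prefix_of_prefix hpu hpu'
      have huu : u = u' := by
        rcases hh (by simp) (by simp) with ⟨ha, hb⟩ | ⟨ha, hb⟩ <;>
          simp only [List.headI_cons] at ha hb
        · rcases hcomp with h | h
          · exact hZp u ha u' hb h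
          · exact (hZp u' hb u ha h).symm
        · rcases hcomp with h | h
          · exact hZ'p u ha u' hb h
          · exact (hZ'p u' hb u ha h).symm
      subst huu
      have hft : t.flatten = t'.flatten := List.append_cancel_left hf
      have htail : t = t' := by
        refine ih t' (fun x hx => hm x (by simp [hx])) (fun x hx => hm' x (by simp [hx]))
          hc.tail hc'.tail ?_ hft
        intro ht ht'
        match t, t', ht, ht' with
        | w :: t₂, w' :: t₂', _, _ =>
          have hcw := (List.isChain_cons_cons.mp hc).1
          have hcw' := (List.isChain_cons_cons.mp hc').1
          simp only [List.headI_cons]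
          by_cases hu' : u ∈ Z'
          · exact Or.inl ⟨hcw.2 hu', hcw'.2 hu'⟩
          · have hu'' : u ∈ Z := (hm u (by simp)).resolve_right hu'
            exact Or.inr ⟨hcw.1 hu'', hcw'.1 hu''⟩
      rw [htail]

private lemma strongAltInduced_props {A : Type} {Z : Language A}
    (h : IsStrongAltInduced Z) : Z.Nonempty ∧ ([] : List A) ∉ Z := by
  obtain ⟨X, Y, ⟨⟨⟨x, hx⟩, ⟨y, hy⟩, hXe, _⟩, _, _⟩, rfl⟩ := h
  refine ⟨⟨x ++ y, Language.mem_mul.mpr ⟨x, hx, y, hy, rfl⟩⟩, ?_⟩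
  intro hmem
  obtain ⟨a, ha, b, hb, hab⟩ := Language.mem_mul.mp hmem
  rcases List.append_eq_nil_iff.mp hab with ⟨rfl, rfl⟩
  exact hXe ha

/-- the product of two infix strong alt-induced codes is a
infix strong alt-induced code. -/
theorem strongAltInduced_mul_infixCode {A : Type} [Fintype A] (Z Z' : Language A)
    (hZ : IsStrongAltInduced Z) (hZ' : IsStrongAltInduced Z')
    (h1 : IsInfixCode Z) (h2 : IsInfixCode Z') :
    IsStrongAltInduced (Z * Z') ∧ IsInfixCode (Z * Z') := by
  obtain ⟨⟨z, hz⟩, hZe⟩ := strongAltInduced_props hZ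
  obtain ⟨⟨z', hz'⟩, hZ'e⟩ := strongAltInduced_props hZ'
  have hZp := infixCode_isPrefixCode' h1
  have hZ'p := infixCode_isPrefixCode' h2
  have hZ's := infixCode_isSuffixCode' h2
  constructor
  · refine ⟨Z, Z', ⟨⟨⟨z, hz⟩, ⟨z', hz'⟩, hZe, hZ'e, ?_⟩, ?_, ?_⟩, rfl⟩
    · intro w hw l l' hl hl' hsim
      obtain ⟨_, hfl, hmem, hch⟩ := hl
      obtain ⟨_, hfl', hmem', hch'⟩ := hl'
      exact uniq_fact' hZp hZ'p hZe hZ'e l l' hmem hmem' hch hch'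
        (fun _ _ => hsim.1) (by rw [hfl, hfl'])
    · intro u hu
      obtain ⟨x, hx, hmem⟩ := hu
      obtain ⟨z₁, hz₁, z₂, hz₂, heq⟩ := Language.mem_mul.mp hmem
      have hx1 : x <+: x ++ u := ⟨u, rfl⟩
      have hx2 : z₁ <+: x ++ u := ⟨z₂, heq⟩
      have hxz : x = z₁ := by
        rcases List.prefix_or_prefix_of_prefix hx1 hx2 with h | h
        · exact hZp x hx z₁ hz₁ h
        · exact (hZp z₁ hz₁ x hx h).symm
      subst hxz
      have : z₂ = u := List.append_cancel_left heq
      exact this ▸ hz₂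
    · intro u hu
      obtain ⟨y, hy, hmem⟩ := hu
      obtain ⟨z₁, hz₁, z₂, hz₂, heq⟩ := Language.mem_mul.mp hmem
      have hy1 : y <:+ u ++ y := ⟨u, rfl⟩
      have hy2 : z₂ <:+ u ++ y := ⟨z₁, heq⟩
      have hyz : y = z₂ := by
        rcases List.suffix_or_suffix_of_suffix hy1 hy2 with h | h
        · exact hZ's y hy z₂ hz₂ h
        · exact (hZ's z₂ hz₂ y hy h).symm
      subst hyz
      have : z₁ = u := List.append_cancel_right heq
      exact this ▸ hz₁
  · exact infix_mul' h1 h2
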